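/- arXiv:1608.04850 — 2 statements merged into one kernel-verified Lean document; each statement's English description precedes it below -/
import Mathlib

section
/- Let s, f, F̂, F ∈ ℝ with |f| ≤ F, and ρ₁, ρ₂, m, μ > 0. Define u = -(F̂ + ρ₁/√2)·sign(s) - ρ₂·s. Then (s/m)·(f + u) + (1/μ)·(F̂ - F)·((μ/m)·|s|) ≤ (1/m)·(-ρ₁/√2·|s| - ρ₂·s²) ≤ 0. -/
open Real

theorem Real.self_mul_sign (r : ℝ) : r * Real.sign r = |r| := by
  rcases lt_trichotomy r 0 with h | rfl | h
  · rw [Real.sign_of_neg h, abs_of_neg h, mul_neg_one]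
  · simp
  · rw [Real.sign_of_pos h, abs_of_pos h, mul_one]

/-- The adaptation term `(F̂ - F)|s|` cancels the `F̂` in the switching gain, and the disturbance
`s f ≤ |s| F` is absorbed by the remaining `-F|s|`. -/
theorem mul_sliding_control_add_adaptation_le {s f Fhat F k ρ : ℝ} (hf : |f| ≤ F) :
    s * (f + (-(Fhat + k) * Real.sign s - ρ * s)) + (Fhat - F) * |s| ≤ -k * |s| - ρ * s ^ 2 := by
  have hsf : s * f ≤ |s| * F :=
    calc s * f ≤ |s * f| := le_abs_self _
      _ = |s| * |f| := abs_mul s f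
      _ ≤ |s| * F := mul_le_mul_of_nonneg_left hf (abs_nonneg s)
  have hexpand : s * (f + (-(Fhat + k) * Real.sign s - ρ * s)) =
      s * f - (Fhat + k) * |s| - ρ * s ^ 2 := by
    rw [← Real.self_mul_sign]; ring
  rw [hexpand]
  linarith

theorem neg_mul_abs_sub_mul_sq_nonpos {k ρ : ℝ} (hk : 0 ≤ k) (hρ : 0 ≤ ρ) (s : ℝ) :
    -k * |s| - ρ * s ^ 2 ≤ 0 := by
  have : 0 ≤ k * |s| + ρ * s ^ 2 := by positivity
  linarith

theorem stmt_3 (s f Fhat F ρ₁ ρ₂ m μ : ℝ) (hf : |f| ≤ F)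
    (hρ₁ : 0 < ρ₁) (hρ₂ : 0 < ρ₂) (hm : 0 < m) (hμ : 0 < μ) :
    (s / m) * (f + (-(Fhat + ρ₁ / Real.sqrt 2) * Real.sign s - ρ₂ * s)) +
        (1 / μ) * (Fhat - F) * ((μ / m) * |s|) ≤
      (1 / m) * (-(ρ₁ / Real.sqrt 2) * |s| - ρ₂ * s ^ 2) ∧
    (1 / m) * (-(ρ₁ / Real.sqrt 2) * |s| - ρ₂ * s ^ 2) ≤ 0 := by
  have hm' : 0 ≤ 1 / m := by positivity
  have hscale : s / m * (f + (-(Fhat + ρ₁ / Real.sqrt 2) * Real.sign s - ρ₂ * s)) +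
      1 / μ * (Fhat - F) * (μ / m * |s|) =
      1 / m * (s * (f + (-(Fhat + ρ₁ / Real.sqrt 2) * Real.sign s - ρ₂ * s)) +
        (Fhat - F) * |s|) := by
    field_simp
  refine ⟨?_, mul_nonpos_of_nonneg_of_nonpos hm' ?_⟩
  · rw [hscale]
    exact mul_le_mul_of_nonneg_left (mul_sliding_control_add_adaptation_le hf) hm'
  · exact neg_mul_abs_sub_mul_sq_nonpos (by positivity) hρ₂.le s
end

section
/- Let a, b, k, c ∈ ℝ and let s = ẋ₃-sliding variable satisfy V̇₆(t) = s·(ẋ₃ + k·x₁ + c·x₂) where ẋ₃ = -a·x₁ - b·x₁³ - c·x₂ + f + u. If the control is u = b·x₁³ + (a-k)·x₁ + v with v = -(F + ρ₁/√2)·sign(s) - ρ₂·s, ρ₁, ρ₂ > 0, and |f| ≤ F, then V̇₆ ≤ -ρ₁·|s|/√2 - ρ₂·s², i.e. V̇₆ ≤ -ρ₁√(V₆) - 2ρ₂V₆ with V₆ = s²/2. -/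
/-! The control cancels the drift `-a x₁ - b x₁³` and the terms `k x₁ + c x₂` exactly, so
`s ṡ = s f - (F + ρ₁/√2)|s| - ρ₂ s²`, and the disturbance is dominated since `s f ≤ F |s|`.
The second inequality is the identity `√(s²/2) = |s|/√2`. -/

open Real

theorem Real.self_mul_sign_s11 (s : ℝ) : s * sign s = |s| := by
  rcases lt_trichotomy s 0 with hs | rfl | hs
  · rw [sign_of_neg hs, abs_of_neg hs, mul_neg_one]
  · rw [sign_zero, mul_zero, abs_zero]
  · rw [sign_of_pos hs, abs_of_pos hs, mul_one]

theorem mul_le_abs_mul_of_abs_le {α : Type*} [Ring α] [LinearOrder α] [IsOrderedRing α]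
    (s : α) {f F : α} (hf : |f| ≤ F) : s * f ≤ |s| * F :=
  calc s * f ≤ |s * f| := le_abs_self _
    _ = |s| * |f| := abs_mul s f
    _ ≤ |s| * F := mul_le_mul_of_nonneg_left hf (abs_nonneg s)

theorem Real.sqrt_sq_div (s : ℝ) {c : ℝ} (hc : 0 ≤ c) : √(s ^ 2 / c) = |s| / √c := by
  rw [sqrt_div' _ hc, sqrt_sq_eq_abs]

theorem sliding_closedLoop_eq (a b k c x₁ x₂ f F η ρ s : ℝ) :
    s * ((-a * x₁ - b * x₁ ^ 3 - c * x₂ + f +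
        (b * x₁ ^ 3 + (a - k) * x₁ + (-(F + η) * sign s - ρ * s))) + k * x₁ + c * x₂) =
      s * f - (F + η) * |s| - ρ * s ^ 2 := by
  rw [← Real.self_mul_sign_s11 s]
  ring

theorem stmt_11_general (a b k c x₁ x₂ f F s ρ₁ ρ₂ : ℝ)
    (hf : |f| ≤ F) :
    s * ((-a * x₁ - b * x₁ ^ 3 - c * x₂ + f +
        (b * x₁ ^ 3 + (a - k) * x₁ +
          (-(F + ρ₁ / Real.sqrt 2) * Real.sign s - ρ₂ * s))) + k * x₁ + c * x₂) ≤
      -ρ₁ * |s| / Real.sqrt 2 - ρ₂ * s ^ 2 ∧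
    -ρ₁ * |s| / Real.sqrt 2 - ρ₂ * s ^ 2 ≤
      -ρ₁ * Real.sqrt (s ^ 2 / 2) - 2 * ρ₂ * (s ^ 2 / 2) := by
  constructor
  · rw [sliding_closedLoop_eq]
    have hdisturbance := mul_le_abs_mul_of_abs_le s hf
    linarith [show -ρ₁ * |s| / √2 = -(ρ₁ / √2 * |s|) by ring]
  · rw [sqrt_sq_div s zero_le_two]
    exact le_of_eq (by ring)

theorem stmt_11 (a b k c x₁ x₂ f F s ρ₁ ρ₂ : ℝ)
    (hρ₁ : 0 < ρ₁) (hρ₂ : 0 < ρ₂) (hf : |f| ≤ F) :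
    s * ((-a * x₁ - b * x₁ ^ 3 - c * x₂ + f +
        (b * x₁ ^ 3 + (a - k) * x₁ +
          (-(F + ρ₁ / Real.sqrt 2) * Real.sign s - ρ₂ * s))) + k * x₁ + c * x₂) ≤
      -ρ₁ * |s| / Real.sqrt 2 - ρ₂ * s ^ 2 ∧
    -ρ₁ * |s| / Real.sqrt 2 - ρ₂ * s ^ 2 ≤
      -ρ₁ * Real.sqrt (s ^ 2 / 2) - 2 * ρ₂ * (s ^ 2 / 2) :=
  stmt_11_general a b k c x₁ x₂ f F s ρ₁ ρ₂ hf
end
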